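/- (Backward Darboux transformation, Section 3.3) Let (Ω, d, d̄) be a bidifferential calculus with A = Ω^0. Let A₀ be an m×m matrix over Ω^1 with d A₀ = 0 and d̄ A₀ − A₀A₀ = 0. Let Γ_η be an m×m matrix over A and κ_η an m×m matrix over Ω^1 with d̄Γ_η − [κ_η,Γ_η] = Γ_η(dΓ_η) and d̄κ_η − κ_η² = Γ_η(dκ_η), and let η be an invertible m×m matrix over A with d̄η = −ηA₀ + Γ_η(dη) + κ_η η. Set σ_{[-1]} := −η^{-1} Γ_η η and A_{[-1]} := A₀ + d σ_{[-1]}. Then: (i) d A_{[-1]} = 0 and d̄ A_{[-1]} − A_{[-1]}A_{[-1]} = 0; (ii) if Γ_χ, κ_χ (sizes n×n over A and Ω^1) satisfy d̄Γ_χ − [κ_χ,Γ_χ] = Γ_χ(dΓ_χ) and d̄κ_χ − κ_χ² = Γ_χ(dκ_χ), and χ is an n×m matrix over A with d̄χ = −χA₀ + Γ_χ(dχ) + κ_χ χ, then χ_{[-1]} := Γ_χ χ + χ σ_{[-1]} satisfies d̄χ_{[-1]} = −χ_{[-1]}A_{[-1]} + Γ_χ(dχ_{[-1]}) + κ_χ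 χ_{[-1]}. -/
import Mathlib


/-- A bidifferential calculus: a unital graded associative algebra
`Ω = ⊕_{r≥0} Ω^r` over a field `𝕂`, together with two `𝕂`-linear graded
derivations `d`, `dbar` of degree one satisfying `d² = d̄² = d d̄ + d̄ d = 0`. -/
structure BidiffCalculus (𝕂 : Type) [Field 𝕂] (Ω : Type) [Ring Ω] [Algebra 𝕂 Ω] where
  grade : ℕ → Submodule 𝕂 Ω
  internal : DirectSum.IsInternal grade
  one_mem : (1 : Ω) ∈ grade 0
  mul_mem : ∀ (r s : ℕ), ∀ a ∈ grade r, ∀ b ∈ grade s, a * b ∈ grade (r + s)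
  d : Ω →ₗ[𝕂] Ω
  dbar : Ω →ₗ[𝕂] Ω
  d_grade : ∀ (r : ℕ), ∀ a ∈ grade r, d a ∈ grade (r + 1)
  dbar_grade : ∀ (r : ℕ), ∀ a ∈ grade r, dbar a ∈ grade (r + 1)
  d_leibniz : ∀ (r : ℕ), ∀ a ∈ grade r, ∀ b : Ω,
      d (a * b) = d a * b + ((-1 : ℤ) ^ r) • (a * d b)
  dbar_leibniz : ∀ (r : ℕ), ∀ a ∈ grade r, ∀ b : Ω,
      dbar (a * b) = dbar a * b + ((-1 : ℤ) ^ r) • (a * dbar b)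
  d_d : ∀ a : Ω, d (d a) = 0
  dbar_dbar : ∀ a : Ω, dbar (dbar a) = 0
  d_dbar_anticomm : ∀ a : Ω, d (dbar a) + dbar (d a) = 0

namespace BidiffCalculus

variable {𝕂 : Type} [Field 𝕂] {Ω : Type} [Ring Ω] [Algebra 𝕂 Ω]

/-- Entrywise action of `d` on matrices over `Ω`. -/
def matD (S : BidiffCalculus 𝕂 Ω) {m n : ℕ} (M : Matrix (Fin m) (Fin n) Ω) :
    Matrix (Fin m) (Fin n) Ω := M.map S.d

/-- Entrywise action of `dbar` on matrices over `Ω`. -/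
def matDbar (S : BidiffCalculus 𝕂 Ω) {m n : ℕ} (M : Matrix (Fin m) (Fin n) Ω) :
    Matrix (Fin m) (Fin n) Ω := M.map S.dbar

/-- A matrix has all entries of degree `r`. -/
def MatIn (S : BidiffCalculus 𝕂 Ω) (r : ℕ) {m n : ℕ} (M : Matrix (Fin m) (Fin n) Ω) : Prop :=
  ∀ i j, M i j ∈ S.grade r

section Helpers

variable (S : BidiffCalculus 𝕂 Ω)

lemma d_one' : S.d 1 = 0 := by
  have h := S.d_leibniz 0 1 S.one_mem 1
  simp only [pow_zero, one_smul, one_mul, mul_one] at h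
  have : S.d 1 + S.d 1 = S.d 1 + 0 := by rw [add_zero]; exact h.symm
  exact (add_left_cancel this)

lemma dbar_one' : S.dbar 1 = 0 := by
  have h := S.dbar_leibniz 0 1 S.one_mem 1
  simp only [pow_zero, one_smul, one_mul, mul_one] at h
  have : S.dbar 1 + S.dbar 1 = S.dbar 1 + 0 := by rw [add_zero]; exact h.symm
  exact (add_left_cancel this)

variable {m n p : ℕ}

lemma matD_add (M N : Matrix (Fin m) (Fin n) Ω) :
    S.matD (M + N) = S.matD M + S.matD N := by
  ext i j; simp [matD, map_add]

lemma matD_neg (M : Matrix (Fin m) (Fin n) Ω) : S.matD (-M) = -S.matD M := by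
  ext i j; simp [matD, map_neg]

lemma matD_sub (M N : Matrix (Fin m) (Fin n) Ω) :
    S.matD (M - N) = S.matD M - S.matD N := by
  ext i j; simp [matD, map_sub]

lemma matDbar_add (M N : Matrix (Fin m) (Fin n) Ω) :
    S.matDbar (M + N) = S.matDbar M + S.matDbar N := by
  ext i j; simp [matDbar, map_add]

lemma matDbar_neg (M : Matrix (Fin m) (Fin n) Ω) : S.matDbar (-M) = -S.matDbar M := by
  ext i j; simp [matDbar, map_neg]

lemma matDbar_sub (M N : Matrix (Fin m) (Fin n) Ω) :
    S.matDbar (M - N) = S.matDbar M - S.matDbar N := by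
  ext i j; simp [matDbar, map_sub]

lemma matD_one : S.matD (1 : Matrix (Fin m) (Fin m) Ω) = 0 := by
  ext i j
  by_cases h : i = j <;>
    simp [matD, Matrix.one_apply, h, S.d_one']

lemma matDbar_one : S.matDbar (1 : Matrix (Fin m) (Fin m) Ω) = 0 := by
  ext i j
  by_cases h : i = j <;>
    simp [matDbar, Matrix.one_apply, h, S.dbar_one']

lemma matD_mul₀ (M : Matrix (Fin m) (Fin n) Ω) (hM : S.MatIn 0 M)
    (N : Matrix (Fin n) (Fin p) Ω) :
    S.matD (M * N) = S.matD M * N + M * S.matD N := by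
  ext i j
  simp only [matD, Matrix.map_apply, Matrix.mul_apply, Matrix.add_apply, map_sum]
  rw [← Finset.sum_add_distrib]
  refine Finset.sum_congr rfl fun k _ => ?_
  rw [S.d_leibniz 0 _ (hM i k) (N k j)]
  simp

lemma matD_mul₁ (M : Matrix (Fin m) (Fin n) Ω) (hM : S.MatIn 1 M)
    (N : Matrix (Fin n) (Fin p) Ω) :
    S.matD (M * N) = S.matD M * N - M * S.matD N := by
  ext i j
  simp only [matD, Matrix.map_apply, Matrix.mul_apply, Matrix.sub_apply, map_sum]
  rw [← Finset.sum_sub_distrib]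
  refine Finset.sum_congr rfl fun k _ => ?_
  rw [S.d_leibniz 1 _ (hM i k) (N k j)]
  simp [sub_eq_add_neg]

lemma matDbar_mul₀ (M : Matrix (Fin m) (Fin n) Ω) (hM : S.MatIn 0 M)
    (N : Matrix (Fin n) (Fin p) Ω) :
    S.matDbar (M * N) = S.matDbar M * N + M * S.matDbar N := by
  ext i j
  simp only [matDbar, Matrix.map_apply, Matrix.mul_apply, Matrix.add_apply, map_sum]
  rw [← Finset.sum_add_distrib]
  refine Finset.sum_congr rfl fun k _ => ?_
  rw [S.dbar_leibniz 0 _ (hM i k) (N k j)]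
  simp

lemma matDbar_mul₁ (M : Matrix (Fin m) (Fin n) Ω) (hM : S.MatIn 1 M)
    (N : Matrix (Fin n) (Fin p) Ω) :
    S.matDbar (M * N) = S.matDbar M * N - M * S.matDbar N := by
  ext i j
  simp only [matDbar, Matrix.map_apply, Matrix.mul_apply, Matrix.sub_apply, map_sum]
  rw [← Finset.sum_sub_distrib]
  refine Finset.sum_congr rfl fun k _ => ?_
  rw [S.dbar_leibniz 1 _ (hM i k) (N k j)]
  simp [sub_eq_add_neg]

lemma matD_matD (M : Matrix (Fin m) (Fin n) Ω) : S.matD (S.matD M) = 0 := by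
  ext i j; simp [matD, S.d_d]

lemma matDbar_matDbar (M : Matrix (Fin m) (Fin n) Ω) : S.matDbar (S.matDbar M) = 0 := by
  ext i j; simp [matDbar, S.dbar_dbar]

lemma matDbar_matD (M : Matrix (Fin m) (Fin n) Ω) :
    S.matDbar (S.matD M) = -S.matD (S.matDbar M) := by
  ext i j
  simp only [matD, matDbar, Matrix.map_apply, Matrix.neg_apply]
  exact eq_neg_of_add_eq_zero_right (S.d_dbar_anticomm (M i j))

lemma MatIn.mul {r s : ℕ} {M : Matrix (Fin m) (Fin n) Ω} {N : Matrix (Fin n) (Fin p) Ω}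
    (hM : S.MatIn r M) (hN : S.MatIn s N) : S.MatIn (r + s) (M * N) := by
  intro i j
  rw [Matrix.mul_apply]
  exact Submodule.sum_mem _ fun k _ => S.mul_mem r s _ (hM i k) _ (hN k j)

lemma MatIn.neg {r : ℕ} {M : Matrix (Fin m) (Fin n) Ω} (hM : S.MatIn r M) :
    S.MatIn r (-M) := fun i j => Submodule.neg_mem _ (hM i j)

lemma MatIn.matD {r : ℕ} {M : Matrix (Fin m) (Fin n) Ω} (hM : S.MatIn r M) :
    S.MatIn (r + 1) (S.matD M) := fun i j => S.d_grade r _ (hM i j)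

end Helpers

end BidiffCalculus

/-- `Φ_{i,j} = θ Δ^i Ω̂^{-1} Γ^j η`, with negative powers given by powers of inverses. -/
def Phi {R : Type} [Ring R] {m n : ℕ} (θ : Matrix (Fin m) (Fin n) R)
    (η : Matrix (Fin n) (Fin m) R) (Δ Γ W : (Matrix (Fin n) (Fin n) R)ˣ) (i j : ℤ) :
    Matrix (Fin m) (Fin m) R :=
  θ * Units.val (Δ ^ i) * Units.val W⁻¹ * Units.val (Γ ^ j) * η

/-- backward Darboux transformation, Section 3.3. -/
theorem backward_darboux
    {𝕂 : Type} [Field 𝕂] [CharZero 𝕂] {Ω : Type} [Ring Ω] [Algebra 𝕂 Ω]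
    (S : BidiffCalculus 𝕂 Ω) {m n : ℕ}
    (A₀ : Matrix (Fin m) (Fin m) Ω) (hA₀1 : S.MatIn 1 A₀)
    (hdA₀ : S.matD A₀ = 0) (hF : S.matDbar A₀ - A₀ * A₀ = 0)
    (Γη kapη : Matrix (Fin m) (Fin m) Ω) (hΓη0 : S.MatIn 0 Γη) (hkapη1 : S.MatIn 1 kapη)
    (heqΓη : S.matDbar Γη - (kapη * Γη - Γη * kapη) = Γη * S.matD Γη)
    (heqkapη : S.matDbar kapη - kapη * kapη = Γη * S.matD kapη)
    (η : (Matrix (Fin m) (Fin m) Ω)ˣ)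
    (hη0 : S.MatIn 0 (Units.val η)) (hηinv0 : S.MatIn 0 (Units.val η⁻¹))
    (hlinη : S.matDbar (Units.val η)
        = -(Units.val η * A₀) + Γη * S.matD (Units.val η) + kapη * Units.val η)
    (Γχ kapχ : Matrix (Fin n) (Fin n) Ω) (hΓχ0 : S.MatIn 0 Γχ) (hkapχ1 : S.MatIn 1 kapχ)
    (heqΓχ : S.matDbar Γχ - (kapχ * Γχ - Γχ * kapχ) = Γχ * S.matD Γχ)
    (heqkapχ : S.matDbar kapχ - kapχ * kapχ = Γχ * S.matD kapχ)
    (χ : Matrix (Fin n) (Fin m) Ω) (hχ0 : S.MatIn 0 χ)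
    (hlinχ : S.matDbar χ = -(χ * A₀) + Γχ * S.matD χ + kapχ * χ) :
    let σ := -(Units.val η⁻¹ * Γη * Units.val η)
    let Anew := A₀ + S.matD σ
    let χnew := Γχ * χ + χ * σ
    S.matD Anew = 0 ∧ S.matDbar Anew - Anew * Anew = 0 ∧
      S.matDbar χnew = -(χnew * Anew) + Γχ * S.matD χnew + kapχ * χnew := by
  intro σ Anew χnew
  have hAnew : Anew = A₀ + S.matD σ := rfl
  have hχnew : χnew = Γχ * χ + χ * σ := rfl
  have hσ' : σ = -(Units.val η⁻¹ * Γη * Units.val η) := rfl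
  clear_value σ Anew χnew
  set e : Matrix (Fin m) (Fin m) Ω := Units.val η with he
  set f : Matrix (Fin m) (Fin m) Ω := Units.val η⁻¹ with hfdef
  have hef : e * f = 1 := η.mul_inv
  have hfe : f * e = 1 := η.inv_mul
  have hσ : σ = -(f * Γη * e) := hσ'
  have cef : ∀ X : Matrix (Fin m) (Fin m) Ω, e * (f * X) = X := fun X => by
    rw [← mul_assoc, hef, one_mul]
  have cfe : ∀ X : Matrix (Fin m) (Fin m) Ω, f * (e * X) = X := fun X => by
    rw [← mul_assoc, hfe, one_mul]
  have hdf : S.matD f = -(f * S.matD e * f) := by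
    have h := S.matD_mul₀ e hη0 f
    rw [hef, S.matD_one] at h
    have h2 := congrArg (fun X => f * X) h.symm
    simp only [mul_zero, mul_add, ← mul_assoc, hfe, one_mul] at h2
    exact eq_neg_of_add_eq_zero_right h2
  have hdbf : S.matDbar f = -(f * S.matDbar e * f) := by
    have h := S.matDbar_mul₀ e hη0 f
    rw [hef, S.matDbar_one] at h
    have h2 := congrArg (fun X => f * X) h.symm
    simp only [mul_zero, mul_add, ← mul_assoc, hfe, one_mul] at h2
    exact eq_neg_of_add_eq_zero_right h2
  have hfG0 : S.MatIn 0 (f * Γη) := BidiffCalculus.MatIn.mul S hηinv0 hΓη0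
  have hσ0 : S.MatIn 0 σ := by
    rw [hσ]
    exact BidiffCalculus.MatIn.neg S (BidiffCalculus.MatIn.mul S hfG0 hη0)
  have hdσ : S.matD σ
      = -(S.matD f * Γη * e + f * S.matD Γη * e + f * Γη * S.matD e) := by
    rw [hσ, S.matD_neg, S.matD_mul₀ (f * Γη) hfG0 e, S.matD_mul₀ f hηinv0 Γη]
    noncomm_ring
  have hGη : S.matDbar Γη = Γη * S.matD Γη + (kapη * Γη - Γη * kapη) := by
    rw [← heqΓη]; noncomm_ring
  have hdbσ : S.matDbar σ = A₀ * σ - σ * A₀ - σ * S.matD σ := by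
    rw [hdσ, hσ, S.matDbar_neg, S.matDbar_mul₀ (f * Γη) hfG0 e,
      S.matDbar_mul₀ f hηinv0 Γη, hdbf, hGη, hlinη, hdf]
    simp only [mul_add, add_mul, neg_mul, mul_neg, neg_add, neg_neg, neg_sub,
      sub_eq_add_neg, mul_assoc, hef, hfe, cef, cfe, mul_one, one_mul]
    abel
  have hA₀sq : S.matDbar A₀ = A₀ * A₀ := sub_eq_zero.mp hF
  have g1 : S.matD (A₀ + S.matD σ) = 0 := by
    rw [S.matD_add, hdA₀, S.matD_matD, add_zero]
  have h2 : S.matDbar (S.matD σ)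
      = A₀ * S.matD σ + S.matD σ * A₀ + S.matD σ * S.matD σ := by
    rw [S.matDbar_matD, hdbσ, S.matD_sub, S.matD_sub,
      S.matD_mul₁ A₀ hA₀1 σ, S.matD_mul₀ σ hσ0 A₀, S.matD_mul₀ σ hσ0 (S.matD σ),
      hdA₀, S.matD_matD]
    noncomm_ring
  have g2 : S.matDbar (A₀ + S.matD σ) - (A₀ + S.matD σ) * (A₀ + S.matD σ) = 0 := by
    rw [S.matDbar_add, h2, hA₀sq]
    noncomm_ring
  have hCχ : S.matDbar Γχ = Γχ * S.matD Γχ + (kapχ * Γχ - Γχ * kapχ) := by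
    rw [← heqΓχ]; noncomm_ring
  have g3 : S.matDbar (Γχ * χ + χ * σ)
      = -((Γχ * χ + χ * σ) * (A₀ + S.matD σ))
        + Γχ * S.matD (Γχ * χ + χ * σ) + kapχ * (Γχ * χ + χ * σ) := by
    rw [S.matDbar_add, S.matDbar_mul₀ Γχ hΓχ0 χ, S.matDbar_mul₀ χ hχ0 σ,
      hCχ, hlinχ, hdbσ, S.matD_add, S.matD_mul₀ Γχ hΓχ0 χ, S.matD_mul₀ χ hχ0 σ]
    simp only [Matrix.mul_add, Matrix.add_mul, Matrix.mul_neg, Matrix.neg_mul,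
      Matrix.mul_sub, Matrix.sub_mul, neg_add, neg_neg, sub_eq_add_neg, Matrix.mul_assoc,
      Matrix.smul_mul, Matrix.mul_smul, smul_add, smul_neg, smul_smul, neg_smul, one_smul]
    abel
  rw [hAnew, hχnew]
  exact ⟨g1, g2, g3⟩
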